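/- Let n be an integer with n = 4 or n ≥ 7. Set P = 2n² − 5n + 5, let F be the nonnegative square root of [ (3n²−12n+16)/4 − n²P/(4(2n²+P)) ] / (n−1)², and set E = 2F − 1. Then [ (n²−10n+16)/4 + n(n+2)(n−2)(n−4)/(8(n²−2n+4)) − (3/8)n(n−2) + (n+2)( (2n²−3n+4)/(3n²−2n+4) + (−6n²+24n−P)/(16n(n+1)) ) ] / (n−1)² ≥ (E² − 1)/4. -/

import Mathlib

/-!
Since `E = 2F - 1`, the right-hand side is `F² - F = A - √A`, where `A` is the radicand defining
`F`. So with `L` the left-hand side it suffices that `(A - L)² ≤ A`, for then `A - L ≤ |A - L| ≤ √A`.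
Both `A` and `L` are rational functions of `n`; after clearing denominators, `(A - L)² ≤ A` is a
polynomial inequality of degree 28, checked directly at `n = 4` and, for `n ≥ 7`, by expanding in
`n - 7`: every coefficient is nonnegative.
-/

/-- The polynomial `P(n) = 2n² - 5n + 5`. -/
noncomputable def Pn (n : ℕ) : ℝ := 2*(n:ℝ)^2 - 5*(n:ℝ) + 5

/-- `F_n`: the nonnegative square root of
`[(3n²-12n+16)/4 - n²P(n)/(4(2n²+P(n)))]/(n-1)²`. -/
noncomputable def Fn (n : ℕ) : ℝ :=
  Real.sqrt (((3*(n:ℝ)^2 - 12*(n:ℝ) + 16)/4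
    - (n:ℝ)^2*Pn n/(4*(2*(n:ℝ)^2 + Pn n))) / ((n:ℝ)-1)^2)

/-- `E_n = 2F_n - 1`. -/
noncomputable def En (n : ℕ) : ℝ := 2*Fn n - 1

namespace Zerilli

/- The radicand of `Fn` and the left-hand side of the theorem, in a real variable with `Pn`
expanded, so that `Fn n = √(radicand n)` and the left-hand side is `lhs n` by definition. -/

noncomputable def radicand (x : ℝ) : ℝ :=
  ((3*x^2 - 12*x + 16)/4 - x^2*(2*x^2 - 5*x + 5)/(4*(2*x^2 + (2*x^2 - 5*x + 5)))) / (x-1)^2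

noncomputable def lhs (x : ℝ) : ℝ :=
  ((x^2 - 10*x + 16)/4
      + x*(x+2)*(x-2)*(x-4)/(8*(x^2 - 2*x + 4))
      - (3/8)*x*(x-2)
      + (x+2)*((2*x^2 - 3*x + 4)/(3*x^2 - 2*x + 4)
          + (-6*x^2 + 24*x - (2*x^2 - 5*x + 5))/(16*x*(x+1))))
      / (x-1)^2

lemma radicand_eq (x : ℝ) :
    radicand x = (10*x^4 - 58*x^3 + 134*x^2 - 140*x + 80) / (4*(4*x^2 - 5*x + 5)*(x-1)^2) := by
  have hQ : 2*x^2 + (2*x^2 - 5*x + 5) ≠ 0 := by nlinarith [sq_nonneg (8*x - 5)]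
  unfold radicand
  rw [div_sub_div _ _ (by norm_num) (by simpa using hQ)]
  field_simp
  ring

lemma lhs_eq {x : ℝ} (hx₀ : x ≠ 0) (hx₁ : x + 1 ≠ 0) :
    lhs x = (-704*x^7 + 2936*x^6 - 5384*x^5 + 7152*x^4 + 7456*x^3 - 8256*x^2 + 20352*x - 1280)
      / (128 * (x^2 - 2*x + 4) * (3*x^2 - 2*x + 4) * x * (x+1) * (x-1)^2) := by
  have hR : x^2 - 2*x + 4 ≠ 0 := by nlinarith [sq_nonneg (x - 1)]
  have hS : 3*x^2 - 2*x + 4 ≠ 0 := by nlinarith [sq_nonneg (3*x - 1)]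
  unfold lhs
  -- kept atomic: `field_simp` would renormalise the quadratics and then not recognise `hR`, `hS`
  generalize hR' : x^2 - 2*x + 4 = R at hR ⊢
  generalize hS' : 3*x^2 - 2*x + 4 = S at hS ⊢
  field_simp
  subst hR' hS'
  ring

lemma sq_div_sub_div_le_div {a b p q : ℝ} (hp : 0 < p) (hq : 0 < q)
    (h : (a*q - b*p)^2 ≤ a*p*q^2) : (a/p - b/q)^2 ≤ a/p := by
  rw [div_sub_div _ _ hp.ne' hq.ne', div_pow, div_le_div_iff₀ (by positivity) hp]
  nlinarith

lemma sq_radicand_sub_lhs_le {x : ℝ} (hx : 7 ≤ x) : (radicand x - lhs x)^2 ≤ radicand x := by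
  have hx₀ : 0 < x := by linarith
  have hx₁ : 0 < x - 1 := by linarith
  have hQ : 0 < 4*x^2 - 5*x + 5 := by nlinarith
  have hR : 0 < x^2 - 2*x + 4 := by nlinarith
  have hS : 0 < 3*x^2 - 2*x + 4 := by nlinarith
  rw [radicand_eq, lhs_eq hx₀.ne' (by linarith)]
  apply sq_div_sub_div_le_div (by positivity) (by positivity)
  obtain ⟨y, hy, rfl⟩ : ∃ y ≥ 0, x = y + 7 := ⟨x - 7, by linarith, by ring⟩
  lift y to NNReal using hy
  rw [← sub_nonneg]
  ring_nf
  positivity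

lemma sub_sqrt_le_of_sq_sub_le {a b : ℝ} (h : (a - b)^2 ≤ a) : a - √a ≤ b := by
  linarith [le_abs_self (a - b), Real.abs_le_sqrt h]

lemma En_sq_sub_one_div_four {n : ℕ} (h : 0 ≤ radicand n) :
    (En n^2 - 1)/4 = radicand n - √(radicand n) := by
  have hF : Fn n = √(radicand n) := rfl
  rw [En, hF]
  linear_combination Real.sq_sqrt h

end Zerilli

open Zerilli

/-- **Arithmetic verification of T-energy positivity for `n = 4` or `n ≥ 7`.**
With `P = 2n² - 5n + 5`, `F` the nonnegative square root of
`[(3n²-12n+16)/4 - n²P/(4(2n²+P))]/(n-1)²` and `E = 2F - 1`, one has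
`[(n²-10n+16)/4 + n(n+2)(n-2)(n-4)/(8(n²-2n+4)) - (3/8)n(n-2)
  + (n+2)((2n²-3n+4)/(3n²-2n+4) + (-6n²+24n-P)/(16n(n+1)))]/(n-1)² ≥ (E²-1)/4`. -/
theorem zerilli_arithmetic_inequality_high_dim
    (n : ℕ) (hn : n = 4 ∨ 7 ≤ n) :
    (((n:ℝ)^2 - 10*(n:ℝ) + 16)/4
      + (n:ℝ)*((n:ℝ)+2)*((n:ℝ)-2)*((n:ℝ)-4)/(8*((n:ℝ)^2 - 2*(n:ℝ) + 4))
      - (3/8)*(n:ℝ)*((n:ℝ)-2)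
      + ((n:ℝ)+2)*((2*(n:ℝ)^2 - 3*(n:ℝ) + 4)/(3*(n:ℝ)^2 - 2*(n:ℝ) + 4)
          + (-6*(n:ℝ)^2 + 24*(n:ℝ) - Pn n)/(16*(n:ℝ)*((n:ℝ)+1))))
      / ((n:ℝ)-1)^2
    ≥ (En n^2 - 1)/4 := by
  have key : (radicand n - lhs n)^2 ≤ radicand n := by
    rcases hn with rfl | hn
    · norm_num [radicand, lhs]
    · exact sq_radicand_sub_lhs_le (by exact_mod_cast hn)
  change lhs n ≥ _
  rw [En_sq_sub_one_div_four ((sq_nonneg _).trans key)]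
  exact sub_sqrt_le_of_sq_sub_le key
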